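/- Suppose U is a 2ⁿ×2ⁿ unitary and σ_{p₁}, σ_{p₂} are n-qubit Pauli matrices with D(U,σ_{p₁}) ≤ ε and D(U,σ_{p₂}) ≤ ε where ε < 1/√2. Then σ_{p₁} = σ_{p₂}. -/

import Mathlib

open Matrix Kronecker BigOperators

noncomputable def frob {m : Type*} [Fintype m] (A : Matrix m m ℂ) : ℝ :=
  Real.sqrt ((Aᴴ * A).trace.re)

noncomputable def pauli1 : Fin 4 → Matrix (Fin 2) (Fin 2) ℂ
  | 0 => !![1, 0; 0, 1]
  | 1 => !![0, 1; 1, 0]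
  | 2 => !![0, -Complex.I; Complex.I, 0]
  | 3 => !![1, 0; 0, -1]

noncomputable def pauli {n : ℕ} (p : Fin n → Fin 4) :
    Matrix (Fin n → Fin 2) (Fin n → Fin 2) ℂ :=
  Matrix.of fun i j => ∏ k, pauli1 (p k) (i k) (j k)

/-- The phase-invariant distance `D(A,B) = sqrt(1 - |tr(A Bᴴ)/2ⁿ|²)` on 2ⁿ×2ⁿ matrices. -/
noncomputable def Dn (n : ℕ) (A B : Matrix (Fin n → Fin 2) (Fin n → Fin 2) ℂ) : ℝ :=
  Real.sqrt (1 - ‖(A * Bᴴ).trace / (2 : ℂ) ^ n‖ ^ 2)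

/-- The distance `D⁺(A,B) = sqrt(1 - Re(tr(A Bᴴ)/2ⁿ))` on 2ⁿ×2ⁿ matrices. -/
noncomputable def DplusN (n : ℕ) (A B : Matrix (Fin n → Fin 2) (Fin n → Fin 2) ℂ) : ℝ :=
  Real.sqrt (1 - ((A * Bᴴ).trace / (2 : ℂ) ^ n).re)

lemma pauli1_orth (u v : Fin 4) :
    ∑ a : Fin 2, ∑ b : Fin 2, (starRingEnd ℂ) (pauli1 u a b) * pauli1 v a b
      = if u = v then 2 else 0 := by
  fin_cases u <;> fin_cases v <;>
    simp [pauli1, Fin.sum_univ_two, Complex.ext_iff] <;> norm_num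

lemma pauli_orth {n : ℕ} (p q : Fin n → Fin 4) :
    ∑ i : Fin n → Fin 2, ∑ j : Fin n → Fin 2,
      (starRingEnd ℂ) (pauli p i j) * pauli q i j
      = if p = q then (2 : ℂ) ^ n else 0 := by
  have key : ∀ i j : Fin n → Fin 2,
      (starRingEnd ℂ) (pauli p i j) * pauli q i j
        = ∏ k, (starRingEnd ℂ) (pauli1 (p k) (i k) (j k)) * pauli1 (q k) (i k) (j k) := by
    intro i j
    simp [pauli, map_prod, Finset.prod_mul_distrib]
  simp only [key]
  have hu : (Finset.univ : Finset (Fin n → Fin 2))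
      = Fintype.piFinset fun _ => (Finset.univ : Finset (Fin 2)) :=
    (Fintype.piFinset_univ).symm
  have step1 : ∀ i : Fin n → Fin 2,
      ∑ j : Fin n → Fin 2, ∏ k, (starRingEnd ℂ) (pauli1 (p k) (i k) (j k)) * pauli1 (q k) (i k) (j k)
        = ∏ k, ∑ b : Fin 2, (starRingEnd ℂ) (pauli1 (p k) (i k) b) * pauli1 (q k) (i k) b := by
    intro i
    rw [hu]
    exact Finset.sum_prod_piFinset Finset.univ
      (fun k b => (starRingEnd ℂ) (pauli1 (p k) (i k) b) * pauli1 (q k) (i k) b)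
  simp only [step1]
  rw [hu]
  rw [Finset.sum_prod_piFinset Finset.univ
      (fun k a => ∑ b : Fin 2, (starRingEnd ℂ) (pauli1 (p k) a b) * pauli1 (q k) a b)]
  have hk : ∀ k : Fin n, ∑ a : Fin 2, ∑ b : Fin 2,
      (starRingEnd ℂ) (pauli1 (p k) a b) * pauli1 (q k) a b
      = if p k = q k then 2 else 0 := fun k => pauli1_orth (p k) (q k)
  simp only [hk]
  by_cases h : p = q
  · simp [h]
  · rw [if_neg h]
    obtain ⟨k, hkk⟩ : ∃ k, p k ≠ q k := Function.ne_iff.mp h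
    exact Finset.prod_eq_zero (Finset.mem_univ k) (if_neg hkk)

noncomputable def emb {n : ℕ} (A : Matrix (Fin n → Fin 2) (Fin n → Fin 2) ℂ) :
    EuclideanSpace ℂ ((Fin n → Fin 2) × (Fin n → Fin 2)) :=
  WithLp.toLp 2 (fun x => A x.1 x.2)

lemma inner_emb {n : ℕ} (A B : Matrix (Fin n → Fin 2) (Fin n → Fin 2) ℂ) :
    (inner ℂ (emb A) (emb B) : ℂ) = (Aᴴ * B).trace := by
  simp only [PiLp.inner_apply, RCLike.inner_apply, emb, PiLp.toLp_apply]
  rw [Matrix.trace, Fintype.sum_prod_type]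
  simp only [Matrix.diag_apply, Matrix.mul_apply, Matrix.conjTranspose_apply]
  rw [Finset.sum_comm]
  simp [RCLike.star_def, mul_comm]

lemma pauli_trace_orth {n : ℕ} (p q : Fin n → Fin 4) :
    ((pauli p)ᴴ * pauli q).trace = if p = q then (2 : ℂ) ^ n else 0 := by
  rw [← inner_emb]
  simp only [PiLp.inner_apply, RCLike.inner_apply, emb, RCLike.star_def, PiLp.toLp_apply]
  rw [Fintype.sum_prod_type]
  simpa only [mul_comm] using pauli_orth p q

lemma sqrt_bound {ε x : ℝ} (hε : ε < 1 / Real.sqrt 2)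
    (hx : Real.sqrt (1 - x) ≤ ε) : 1 / 2 < x := by
  by_contra h
  push_neg at h
  have h1 : (1 : ℝ) / Real.sqrt 2 = Real.sqrt (1 / 2) := by
    rw [one_div, one_div, ← Real.sqrt_inv]
  have h2 : Real.sqrt (1 / 2) ≤ Real.sqrt (1 - x) := Real.sqrt_le_sqrt (by linarith)
  rw [h1] at hε
  linarith

/-- If D(U,σ_{p₁}) ≤ ε and D(U,σ_{p₂}) ≤ ε with ε < 1/√2, then σ_{p₁} = σ_{p₂}. -/
theorem close_pauli_unique (n : ℕ) (ε : ℝ) (hε : ε < 1 / Real.sqrt 2)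
    (U : Matrix (Fin n → Fin 2) (Fin n → Fin 2) ℂ)
    (hU : U ∈ Matrix.unitaryGroup (Fin n → Fin 2) ℂ)
    (p₁ p₂ : Fin n → Fin 4)
    (h₁ : Dn n U (pauli p₁) ≤ ε) (h₂ : Dn n U (pauli p₂) ≤ ε) :
    pauli p₁ = pauli p₂ := by
  by_contra hne
  have hpq : p₁ ≠ p₂ := fun h => hne (by rw [h])
  set P : ℝ := (2 : ℝ) ^ n with hP
  have hPpos : 0 < P := by positivity
  -- the normalization constant
  set c : ℂ := ((Real.sqrt 2 ^ n : ℝ) : ℂ)⁻¹ with hc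
  have hsq : (Real.sqrt 2 ^ n) ^ 2 = P := by
    rw [← pow_mul, mul_comm, pow_mul, Real.sq_sqrt (by norm_num : (2:ℝ) ≥ 0)]
  have hcc : (starRingEnd ℂ) c * c = ((2 : ℂ) ^ n)⁻¹ := by
    rw [hc, map_inv₀, Complex.conj_ofReal, ← mul_inv, ← Complex.ofReal_mul]
    norm_cast
    rw [← sq, hsq, hP, Complex.ofReal_inv]
    push_cast
    ring
  -- the orthonormal family
  set v : (Fin n → Fin 4) → EuclideanSpace ℂ ((Fin n → Fin 2) × (Fin n → Fin 2)) :=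
    fun p => c • emb (pauli p) with hv
  have horth : Orthonormal ℂ v := by
    rw [orthonormal_iff_ite]
    intro p q
    rw [hv]
    simp only [inner_smul_left, inner_smul_right, inner_emb, pauli_trace_orth]
    rw [← mul_assoc, mul_comm c ((starRingEnd ℂ) c), hcc]
    by_cases h : p = q
    · subst h
      rw [if_pos rfl, if_pos rfl, inv_mul_cancel₀ (by
        exact pow_ne_zero n two_ne_zero)]
    · simp [h]
  -- Bessel's inequality for {p₁, p₂}
  have hbessel := horth.sum_inner_products_le (emb U) (s := {p₁, p₂})
  rw [Finset.sum_pair hpq] at hbessel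
  -- norm of emb U
  have hUU : Uᴴ * U = 1 := by
    have := hU.1
    rwa [Matrix.star_eq_conjTranspose] at this
  have hxnorm : ‖emb U‖ ^ 2 = P := by
    rw [@norm_sq_eq_re_inner ℂ, inner_emb, hUU, Matrix.trace_one]
    simp only [hP, RCLike.natCast_re]
    norm_num
  -- compute the inner products
  have hip : ∀ p : Fin n → Fin 4,
      ‖(inner ℂ (v p) (emb U) : ℂ)‖ ^ 2
        = ‖((pauli p)ᴴ * U).trace‖ ^ 2 / P := by
    intro p
    rw [hv]
    simp only [inner_smul_left, inner_emb]
    rw [norm_mul, mul_pow]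
    have : ‖(starRingEnd ℂ) c‖ ^ 2 = P⁻¹ := by
      rw [RCLike.norm_conj, hc, norm_inv, inv_pow, Complex.norm_real,
        Real.norm_of_nonneg (by positivity), hsq]
    rw [this]
    ring
  rw [hip p₁, hip p₂, hxnorm] at hbessel
  -- relate to the D-distance hypotheses
  have habs : ∀ p : Fin n → Fin 4,
      ‖(U * (pauli p)ᴴ).trace / (2 : ℂ) ^ n‖
        = ‖((pauli p)ᴴ * U).trace‖ / P := by
    intro p
    rw [Matrix.trace_mul_comm, norm_div]
    congr 1
    rw [norm_pow, Complex.norm_two, hP]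
  set a₁ : ℝ := ‖((pauli p₁)ᴴ * U).trace‖ with ha₁
  set a₂ : ℝ := ‖((pauli p₂)ᴴ * U).trace‖ with ha₂
  have hd₁ : 1 / 2 < (a₁ / P) ^ 2 := by
    apply sqrt_bound hε
    rw [Dn, habs p₁] at h₁
    exact h₁
  have hd₂ : 1 / 2 < (a₂ / P) ^ 2 := by
    apply sqrt_bound hε
    rw [Dn, habs p₂] at h₂
    exact h₂
  have e₁ : (a₁ / P) ^ 2 = a₁ ^ 2 / P ^ 2 := by ring
  have e₂ : (a₂ / P) ^ 2 = a₂ ^ 2 / P ^ 2 := by ring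
  rw [e₁] at hd₁
  rw [e₂] at hd₂
  have hP2 : 0 < P ^ 2 := by positivity
  rw [div_lt_div_iff₀ (by norm_num) hP2] at hd₁ hd₂
  rw [← add_div, div_le_iff₀ hPpos] at hbessel
  nlinarith [sq_nonneg P]
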